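/- Correctness of the future-index reduction for F: for a lasso trace σ = uv^ω and i < |uv|, (σ, i) ⊨ Fφ if and only if there exists j in the reachable set R(i) = (if i < |u| then {i, ..., |uv|-1} else {|u|, ..., |uv|-1} ∪ {i,...,|uv|-1}) such that (σ, j) ⊨ φ. -/
import Mathlib

inductive LTL (AP : Type) : Type where
  | atom : AP → LTL AP
  | neg : LTL AP → LTL AP
  | and : LTL AP → LTL AP → LTL AP
  | or : LTL AP → LTL AP → LTL AP
  | imp : LTL AP → LTL AP → LTL AP
  | next : LTL AP → LTL AP
  | fut : LTL AP → LTL AP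
  | glob : LTL AP → LTL AP
  | until_ : LTL AP → LTL AP → LTL AP

def sat {AP : Type} (σ : ℕ → Set AP) : LTL AP → ℕ → Prop
  | .atom p, i => p ∈ σ i
  | .neg φ, i => ¬ sat σ φ i
  | .and φ ψ, i => sat σ φ i ∧ sat σ ψ i
  | .or φ ψ, i => sat σ φ i ∨ sat σ ψ i
  | .imp φ ψ, i => sat σ φ i → sat σ ψ i
  | .next φ, i => sat σ φ (i + 1)
  | .fut φ, i => ∃ j, i ≤ j ∧ sat σ φ j
  | .glob φ, i => ∀ j, i ≤ j → sat σ φ j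
  | .until_ φ ψ, i => ∃ j, i ≤ j ∧ sat σ ψ j ∧ ∀ k, i ≤ k → k < j → sat σ φ k

def lasso {AP : Type} (u v : List (Set AP)) : ℕ → Set AP :=
  fun i => if i < u.length then u.getD i ∅
           else v.getD ((i - u.length) % v.length) ∅

lemma lasso_shift {AP : Type} (u v : List (Set AP)) {j : ℕ} (hj : u.length ≤ j) :
    lasso u v (j + v.length) = lasso u v j := by
  unfold lasso
  rw [if_neg (by omega), if_neg (by omega)]
  congr 1
  have : j + v.length - u.length = (j - u.length) + v.length := by omega
  rw [this, Nat.add_mod_right]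

lemma sat_shift {AP : Type} (u v : List (Set AP)) (φ : LTL AP) :
    ∀ j, u.length ≤ j → (sat (lasso u v) φ j ↔ sat (lasso u v) φ (j + v.length)) := by
  induction φ with
  | atom p => intro j hj; simp only [sat, lasso_shift u v hj]
  | neg φ ih => intro j hj; simp only [sat, ih j hj]
  | and φ ψ ih1 ih2 => intro j hj; simp only [sat, ih1 j hj, ih2 j hj]
  | or φ ψ ih1 ih2 => intro j hj; simp only [sat, ih1 j hj, ih2 j hj]
  | imp φ ψ ih1 ih2 => intro j hj; simp only [sat, ih1 j hj, ih2 j hj]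
  | next φ ih =>
      intro j hj
      simp only [sat]
      have := ih (j+1) (by omega)
      rw [this]; ring_nf
  | fut φ ih =>
      intro j hj
      simp only [sat]
      constructor
      · rintro ⟨k, hk, hs⟩
        exact ⟨k + v.length, by omega, (ih k (by omega)).mp hs⟩
      · rintro ⟨k, hk, hs⟩
        refine ⟨k - v.length, by omega, (ih (k - v.length) (by omega)).mpr ?_⟩
        have : k - v.length + v.length = k := by omega
        rwa [this]
  | glob φ ih =>
      intro j hj
      simp only [sat]
      constructor
      · intro h k hk
        have : k - v.length + v.length = k := by omega
        rw [← this]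
        exact (ih (k - v.length) (by omega)).mp (h _ (by omega))
      · intro h k hk
        exact (ih k (by omega)).mpr (h (k + v.length) (by omega))
  | until_ φ ψ ih1 ih2 =>
      intro j hj
      simp only [sat]
      constructor
      · rintro ⟨k, hk, hs, hall⟩
        refine ⟨k + v.length, by omega, (ih2 k (by omega)).mp hs, ?_⟩
        intro m hm1 hm2
        have hm : m - v.length + v.length = m := by omega
        rw [← hm]
        exact (ih1 (m - v.length) (by omega)).mp (hall _ (by omega) (by omega))
      · rintro ⟨k, hk, hs, hall⟩
        refine ⟨k - v.length, by omega, (ih2 (k - v.length) (by omega)).mpr ?_, ?_⟩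
        · have : k - v.length + v.length = k := by omega
          rwa [this]
        · intro m hm1 hm2
          exact (ih1 m (by omega)).mpr (hall (m + v.length) (by omega) (by omega))

lemma sat_shift_mul {AP : Type} (u v : List (Set AP)) (φ : LTL AP) (n : ℕ) :
    ∀ j, u.length ≤ j → (sat (lasso u v) φ j ↔ sat (lasso u v) φ (j + n * v.length)) := by
  induction n with
  | zero => intro j hj; simp
  | succ n ih =>
      intro j hj
      rw [ih j hj, sat_shift u v φ (j + n * v.length) (by omega)]
      ring_nf

theorem fut_futureIdx_reduction {AP : Type} (u v : List (Set AP)) (hv : v ≠ [])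
    (φ : LTL AP) (i : ℕ) (hi : i < u.length + v.length) :
    sat (lasso u v) (.fut φ) i ↔
      ∃ j, (if i < u.length then i else u.length) ≤ j ∧
        j < u.length + v.length ∧ sat (lasso u v) φ j := by
  have hv' : 0 < v.length := List.length_pos_iff.mpr hv
  simp only [sat]
  constructor
  · rintro ⟨k, hk, hs⟩
    by_cases hk2 : k < u.length + v.length
    · exact ⟨k, by split <;> omega, hk2, hs⟩
    · set j := u.length + (k - u.length) % v.length with hj
      have hr : (k - u.length) % v.length < v.length := Nat.mod_lt _ hv'
      have hkj : k = j + ((k - u.length) / v.length) * v.length := by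
        have h1 := Nat.div_add_mod (k - u.length) v.length
        have h2 : ((k - u.length) / v.length) * v.length = v.length * ((k - u.length) / v.length) := Nat.mul_comm _ _
        omega
      refine ⟨j, by split <;> omega, by omega, ?_⟩
      rw [sat_shift_mul u v φ ((k - u.length) / v.length) j (by omega), ← hkj]
      exact hs
  · rintro ⟨j, hj1, hj2, hs⟩
    by_cases hiu : i < u.length
    · rw [if_pos hiu] at hj1; exact ⟨j, hj1, hs⟩
    · rw [if_neg hiu] at hj1
      by_cases hij : i ≤ j
      · exact ⟨j, hij, hs⟩
      · refine ⟨j + 1 * v.length, by omega, ?_⟩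
        rw [← sat_shift_mul u v φ 1 j (by omega)]
        exact hs
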